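/- arXiv:1804.01833 — 3 statements merged into one kernel-verified Lean document; each statement's English description precedes it below -/
import Mathlib

section
/- In the canonical representation of Q₂ on ℓ²(ℤ) (U e_k = e_{k+1}, S₂ e_k = e_{2k}, S₁ := U S₂ so S₁ e_k = e_{2k+1}), for any word α = (α₁, …, α_m) ∈ {1,2}^m, the range of the projection P_α = S_α S_α* (where S_α = S_{α₁}⋯S_{α_m}) is the closed span of {e_{2^m k + l} : k ∈ ℤ} for some l ∈ ℕ depending on α with 0 ≤ l < 2^m. Consequently, for every integer h with 0 < h < 2^m, the projections U^h P_α U^{-h} and P_α are orthogonal, i.e. U^h P_α U^{-h} · P_α = 0. -/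
open ContinuousLinearMap

noncomputable def e (k : ℤ) : lp (fun _ : ℤ => ℂ) 2 := lp.single 2 k 1

/-! `S_α` sends `e_k` to `e_{2^m k + l}`, where `l` has binary digits `α` read from `α₁` as the
least significant one. Hence `P_α = S_α S_α*` keeps the basis vectors indexed by the residue class
`l + 2^m ℤ` and kills the others, and `U^h P_α U^{-h}` does the same for the class `l + h + 2^m ℤ`,
which is disjoint from `l + 2^m ℤ` when `0 < h < 2^m`. -/

open scoped InnerProductSpace

namespace HilbertBasis

variable {ι 𝕜 E : Type*} [RCLike 𝕜] [NormedAddCommGroup E] [InnerProductSpace 𝕜 E]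
  (b : HilbertBasis ι 𝕜 E)

theorem ext_inner_left {x y : E} (h : ∀ i, ⟪b i, x⟫_𝕜 = ⟪b i, y⟫_𝕜) :
    x = y :=
  b.repr.injective <| lp.ext <| funext fun i => by simp only [b.repr_apply_apply, h i]

theorem continuousLinearMap_ext {F : Type*} [TopologicalSpace F] [AddCommMonoid F] [Module 𝕜 F]
    [T2Space F] {A B : E →L[𝕜] F} (h : ∀ i, A (b i) = B (b i)) :
    A = B :=
  ext_on (Submodule.dense_iff_topologicalClosure_eq_top.mpr b.dense_span)
    (by rintro _ ⟨i, rfl⟩; exact h i)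

def IsCoordinateProjection (s : Set ι) (P : E →L[𝕜] E) : Prop :=
  ∀ i, P (b i) = s.indicator b i

variable {b}

namespace IsCoordinateProjection

variable {s t : Set ι} {P Q : E →L[𝕜] E}

theorem range_eq (hP : b.IsCoordinateProjection s P) :
    Set.range P = closure (Submodule.span 𝕜 (b '' s) : Set E) := by
  set K := Submodule.span 𝕜 (b '' s)
  rw [← K.topologicalClosure_coe]
  apply subset_antisymm
  · have hspan : Submodule.span 𝕜 (Set.range b) ≤ K.topologicalClosure.comap (P : E →ₗ[𝕜] E) := by
      rw [Submodule.span_le]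
      rintro _ ⟨i, rfl⟩
      show P (b i) ∈ K.topologicalClosure
      by_cases hi : i ∈ s
      · rw [hP i, Set.indicator_of_mem hi]
        exact K.le_topologicalClosure (Submodule.subset_span (Set.mem_image_of_mem b hi))
      · rw [hP i, Set.indicator_of_notMem hi]
        exact zero_mem _
    have htop := Submodule.topologicalClosure_minimal _ hspan
      (K.isClosed_topologicalClosure.preimage P.continuous)
    rw [b.dense_span] at htop
    rintro _ ⟨x, rfl⟩
    exact htop Submodule.mem_top
  · have hfix : K ≤ LinearMap.eqLocus (P : E →ₗ[𝕜] E) LinearMap.id := by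
      rw [Submodule.span_le]
      rintro _ ⟨i, hi, rfl⟩
      simp [hP i, hi]
    intro x hx
    exact ⟨x, Submodule.topologicalClosure_minimal _ hfix
      (isClosed_eq P.continuous continuous_id) hx⟩

theorem mul_eq_zero (hQ : b.IsCoordinateProjection t Q) (hP : b.IsCoordinateProjection s P)
    (hts : Disjoint t s) : Q * P = 0 := by
  refine b.continuousLinearMap_ext fun i => ?_
  by_cases hi : i ∈ s
  · simp [hP i, hQ i, hi, Set.disjoint_right.mp hts hi]
  · simp [hP i, hi]

end IsCoordinateProjection

variable [CompleteSpace E] {A : E →L[𝕜] E} {σ : ι → ι}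

theorem adjoint_apply_apply_of_injective (hA : ∀ i, A (b i) = b (σ i))
    (hσ : Function.Injective σ) (j : ι) : adjoint A (b (σ j)) = b j := by
  classical
  refine b.ext_inner_left fun i => ?_
  simp only [adjoint_inner_right, hA, orthonormal_iff_ite.mp b.orthonormal, hσ.eq_iff]

theorem adjoint_apply_eq_zero_of_notMem_range (hA : ∀ i, A (b i) = b (σ i)) {n : ι}
    (hn : n ∉ Set.range σ) : adjoint A (b n) = 0 := by
  classical
  refine b.ext_inner_left fun i => ?_
  have hσn : σ i ≠ n := fun h => hn ⟨i, h⟩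
  simp only [adjoint_inner_right, hA, orthonormal_iff_ite.mp b.orthonormal, hσn, if_false,
    inner_zero_right]

theorem isCoordinateProjection_mul_adjoint (hA : ∀ i, A (b i) = b (σ i))
    (hσ : Function.Injective σ) : b.IsCoordinateProjection (Set.range σ) (A * adjoint A) := by
  intro n
  by_cases hn : n ∈ Set.range σ
  · obtain ⟨j, rfl⟩ := hn
    rw [Set.indicator_of_mem (Set.mem_range_self j), mul_apply_eq_comp,
      adjoint_apply_apply_of_injective hA hσ, hA]
  · rw [Set.indicator_of_notMem hn, mul_apply_eq_comp,
      adjoint_apply_eq_zero_of_notMem_range hA hn, map_zero]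

theorem IsCoordinateProjection.conj {s : Set ι} {P V : E →L[𝕜] E}
    (hP : b.IsCoordinateProjection s P) (τ : ι ≃ ι) (hV : ∀ i, V (b i) = b (τ i)) :
    b.IsCoordinateProjection (τ '' s) (V * P * adjoint V) := by
  classical
  intro n
  have hadj : adjoint V (b n) = b (τ.symm n) := by
    simpa using adjoint_apply_apply_of_injective hV τ.injective (τ.symm n)
  simp only [mul_apply_eq_comp, hadj, hP _, Set.indicator_apply, Set.mem_image_equiv]
  split_ifs <;> simp [hV]

end HilbertBasis

theorem disjoint_image_addRight_range_mul_add {N h : ℤ} (hpos : 0 < h) (hlt : h < N) (l : ℤ) :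
    Disjoint (Equiv.addRight h '' Set.range fun k => N * k + l) (Set.range fun k => N * k + l) := by
  rw [Set.disjoint_left]
  rintro _ ⟨_, ⟨j, rfl⟩, rfl⟩ ⟨j', hj'⟩
  simp only [Equiv.coe_addRight] at hj'
  have hmul : h = N * (j' - j) := by linarith
  rcases le_or_gt (j' - j) 0 with hd | hd <;> nlinarith

section Canonical

lemma hilbertBasis_default_apply (k : ℤ) :
    (default : HilbertBasis ℤ ℂ (lp (fun _ : ℤ => ℂ) 2)) k = e k :=
  (HilbertBasis.repr_symm_single _ k).symm

variable {U S₁ S₂ : lp (fun _ : ℤ => ℂ) 2 →L[ℂ] lp (fun _ : ℤ => ℂ) 2}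

lemma pow_apply_e (hU : ∀ k : ℤ, U (e k) = e (k + 1)) (n : ℕ) (k : ℤ) :
    (U ^ n) (e k) = e (k + n) := by
  induction n with
  | zero => simp
  | succ n ih =>
    rw [pow_succ', mul_apply_eq_comp, ih, hU]
    congr 1
    push_cast
    ring

lemma word_prod_apply_e (hS₁ : ∀ k : ℤ, S₁ (e k) = e (2 * k + 1))
    (hS₂ : ∀ k : ℤ, S₂ (e k) = e (2 * k)) (α : List Bool) (k : ℤ) :
    (α.map fun b => if b then S₁ else S₂).prod (e k) =
      e (2 ^ α.length * k + (Nat.ofDigits 2 (α.map Bool.toNat) : ℕ)) := by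
  induction α generalizing k with
  | nil => simp
  | cons c t ih =>
    rw [List.map_cons, List.prod_cons, mul_apply_eq_comp, ih]
    cases c <;>
    · simp only [List.map_cons, List.length_cons, Nat.ofDigits_cons, Bool.toNat_false,
        Bool.toNat_true, Bool.false_eq_true, if_true, if_false, hS₁, hS₂]
      congr 1
      push_cast
      ring

end Canonical

/-- In the canonical representation of `Q₂` on `ℓ²(ℤ)`, for a word `α` in `{1,2}` of
length `m` (encoded as a list of booleans, `true ↦ S₁`, `false ↦ S₂`), the range of the
projection `P_α = S_α S_α*` is the closed span of `{e_{2^m k + l} : k ∈ ℤ}` for some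
`0 ≤ l < 2^m`; consequently `U^h P_α U^{-h}` and `P_α` are orthogonal for `0 < h < 2^m`. -/
theorem stmt12 (U S₁ S₂ : lp (fun _ : ℤ => ℂ) 2 →L[ℂ] lp (fun _ : ℤ => ℂ) 2)
    (hU : ∀ k : ℤ, U (e k) = e (k + 1))
    (hS₂ : ∀ k : ℤ, S₂ (e k) = e (2 * k))
    (hS₁ : S₁ = U * S₂)
    (α : List Bool) (Sα Pα : lp (fun _ : ℤ => ℂ) 2 →L[ℂ] lp (fun _ : ℤ => ℂ) 2)
    (hSα : Sα = (α.map fun b => if b then S₁ else S₂).prod)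
    (hPα : Pα = Sα * adjoint Sα) :
    (∃ l : ℤ, 0 ≤ l ∧ l < 2 ^ α.length ∧
      Set.range ⇑Pα =
        closure ((Submodule.span ℂ (Set.range fun k : ℤ => e (2 ^ α.length * k + l)) :
          Submodule ℂ (lp (fun _ : ℤ => ℂ) 2)) : Set (lp (fun _ : ℤ => ℂ) 2))) ∧
    (∀ h : ℕ, 0 < h → (h : ℤ) < 2 ^ α.length →
      (U ^ h * Pα * adjoint (U ^ h)) * Pα = 0) := by
  set b : HilbertBasis ℤ ℂ (lp (fun _ : ℤ => ℂ) 2) := default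
  set l : ℕ := Nat.ofDigits 2 (α.map Bool.toNat)
  have hl : l < 2 ^ α.length := α.length_map Bool.toNat ▸
    Nat.ofDigits_lt_base_pow_length one_lt_two fun x hx => by
      obtain ⟨c, -, rfl⟩ := List.mem_map.mp hx
      exact c.toNat_lt
  have hS₁e : ∀ k, S₁ (e k) = e (2 * k + 1) := fun k => by rw [hS₁, mul_apply_eq_comp, hS₂, hU]
  have hS : ∀ k, Sα (b k) = b (2 ^ α.length * k + l) := fun k => by
    simpa only [b, hilbertBasis_default_apply, hSα] using word_prod_apply_e hS₁e hS₂ α k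
  have hP : b.IsCoordinateProjection (Set.range fun k => 2 ^ α.length * k + (l : ℤ)) Pα :=
    hPα ▸ HilbertBasis.isCoordinateProjection_mul_adjoint hS fun j j' h =>
      mul_left_cancel₀ (by positivity) (add_right_cancel h)
  refine ⟨⟨l, l.cast_nonneg, by exact_mod_cast hl, ?_⟩, fun h hpos hlt => ?_⟩
  · rw [hP.range_eq, ← Set.range_comp]
    simp only [Function.comp_def, b, hilbertBasis_default_apply]
  · refine (hP.conj (Equiv.addRight (h : ℤ)) fun k => ?_).mul_eq_zero hP
      (disjoint_image_addRight_range_mul_add (by exact_mod_cast hpos) hlt _)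
    simpa [b, hilbertBasis_default_apply] using pow_apply_e hU h k
end

section
/- On ℓ²(ℤ) with U e_k = e_{k+1}, S₂ e_k = e_{2k}, S₁ = U S₂, define S̃₁ = S₂² S₁* + S₁ S₂ S₂* and S̃₂ = S₂ S₁ S₁* + S₁² S₂* (the images of the generators under the endomorphism ρ₁₄ of O₂), and set Ũ = U^{−2}. Then: (a) S̃₁ e_{2k} = e_{4k+1}, S̃₁ e_{2k+1} = e_{4k}, S̃₂ e_{2k} = e_{4k+3}, S̃₂ e_{2k+1} = e_{4k+2} for all k ∈ ℤ [equivalently as stated via the relevant index computations]; (b) Ũ S̃₂ = S̃₁ and S̃₂ Ũ = Ũ S̃₁. Hence (S̃₂, Ũ) satisfy the defining relations of Q₂: S̃₂ Ũ = Ũ² S̃₂ and S̃₂ S̃₂* + Ũ S̃₂ S̃₂* Ũ* = 1. -/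
/-!
Every operator in sight sends basis vectors to basis vectors or to `0`, so all identities can be
checked on the basis `e_k`. If `A e_i = e_{g i}` with `g` injective, then `A*` sends `e_{g i}` to
`e_i` and kills `e_m` for `m ∉ range g`, so `A A*` is the projection onto the span of the `e_m`
with `m ∈ range g`. For `S̃₂` this range is `{m ≡ 2, 3 mod 4}`; conjugation by `Ũ = U^{-2}`
shifts it to the complementary residues `{m ≡ 0, 1 mod 4}`, whence `S̃₂ S̃₂* + Ũ S̃₂ S̃₂* Ũ* = 1`.
-/

open ContinuousLinearMap

open Function Set

namespace HilbertBasis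

variable {ι κ 𝕜 E F : Type*} [RCLike 𝕜] [NormedAddCommGroup E] [InnerProductSpace 𝕜 E]
  [NormedAddCommGroup F] [InnerProductSpace 𝕜 F]

theorem ext_continuousLinearMap (b : HilbertBasis ι 𝕜 E) {A B : E →L[𝕜] F}
    (h : ∀ i, A (b i) = B (b i)) : A = B :=
  ContinuousLinearMap.ext_on (Submodule.dense_iff_topologicalClosure_eq_top.mpr b.dense_span)
    (by rintro _ ⟨i, rfl⟩; exact h i)

theorem ext_inner {b : HilbertBasis ι 𝕜 E} {x y : E}
    (h : ∀ i, inner 𝕜 (b i) x = inner 𝕜 (b i) y) : x = y :=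
  b.repr.injective <| lp.ext <| funext fun i => by simp only [b.repr_apply_apply, h]

variable [CompleteSpace E] [CompleteSpace F] {b : HilbertBasis ι 𝕜 E} {c : HilbertBasis κ 𝕜 F}
  {A : E →L[𝕜] F} {g : ι → κ}

theorem inner_adjoint_apply (hA : ∀ i, A (b i) = c (g i)) (i : ι) (m : κ) :
    inner 𝕜 (b i) (adjoint A (c m)) = inner 𝕜 (c (g i)) (c m) := by
  rw [adjoint_inner_right, hA]

theorem adjoint_apply_of_injective (hg : Injective g) (hA : ∀ i, A (b i) = c (g i)) (i : ι) :
    adjoint A (c (g i)) = b i := by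
  classical
  refine ext_inner (b := b) fun j => ?_
  rw [inner_adjoint_apply hA, orthonormal_iff_ite.mp c.orthonormal,
    orthonormal_iff_ite.mp b.orthonormal, hg.eq_iff]

theorem adjoint_apply_eq_zero (hA : ∀ i, A (b i) = c (g i)) {m : κ} (hm : m ∉ range g) :
    adjoint A (c m) = 0 :=
  ext_inner (b := b) fun j => by
    rw [inner_adjoint_apply hA, inner_zero_right,
      c.orthonormal.inner_eq_zero fun h => hm ⟨j, h⟩]

theorem apply_adjoint_apply (hg : Injective g) (hA : ∀ i, A (b i) = c (g i)) (m : κ) :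
    A (adjoint A (c m)) = (range g).indicator c m := by
  by_cases hm : m ∈ range g
  · obtain ⟨i, rfl⟩ := hm
    rw [adjoint_apply_of_injective hg hA, hA, indicator_of_mem (mem_range_self i)]
  · rw [adjoint_apply_eq_zero hA hm, map_zero, indicator_of_notMem hm]

end HilbertBasis

theorem e_eq_default : e = ⇑(default : HilbertBasis ℤ ℂ (lp (fun _ : ℤ => ℂ) 2)) := by
  funext k
  rw [← HilbertBasis.repr_symm_single]
  rfl

def rho14Index (k : ℤ) : ℤ := if k % 2 = 0 then 2 * k + 3 else 2 * k

theorem rho14Index_two_mul (k : ℤ) : rho14Index (2 * k) = 4 * k + 3 := by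
  unfold rho14Index; split_ifs <;> omega

theorem rho14Index_two_mul_add_one (k : ℤ) : rho14Index (2 * k + 1) = 4 * k + 2 := by
  unfold rho14Index; split_ifs <;> omega

theorem rho14Index_injective : Injective rho14Index := by
  intro j k h; unfold rho14Index at h; split_ifs at h <;> omega

theorem mem_range_rho14Index {m : ℤ} : m ∈ range rho14Index ↔ m % 4 = 2 ∨ m % 4 = 3 := by
  constructor
  · rintro ⟨k, rfl⟩; unfold rho14Index; split_ifs <;> omega
  · intro hm
    refine ⟨if m % 4 = 2 then m / 2 else m / 2 - 1, ?_⟩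
    unfold rho14Index; split_ifs <;> omega

theorem add_two_mem_range_rho14Index {m : ℤ} :
    m + 2 ∈ range rho14Index ↔ m ∉ range rho14Index := by
  rw [mem_range_rho14Index, mem_range_rho14Index]; omega

section Rho14

variable {𝕜 E : Type*} [RCLike 𝕜] [NormedAddCommGroup E] [InnerProductSpace 𝕜 E] [CompleteSpace E]
  {b : HilbertBasis ℤ 𝕜 E} {S₁ S₂ St₁ St₂ Ut : E →L[𝕜] E}

theorem St_apply_two_mul (hS₂ : ∀ k, S₂ (b k) = b (2 * k)) (hS₁ : ∀ k, S₁ (b k) = b (2 * k + 1))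
    (hSt₁ : St₁ = S₂ ^ 2 * adjoint S₁ + S₁ * S₂ * adjoint S₂)
    (hSt₂ : St₂ = S₂ * S₁ * adjoint S₁ + S₁ ^ 2 * adjoint S₂) (k : ℤ) :
    St₁ (b (2 * k)) = b (4 * k + 1) ∧ St₂ (b (2 * k)) = b (4 * k + 3) := by
  have hS₂' : adjoint S₂ (b (2 * k)) = b k :=
    HilbertBasis.adjoint_apply_of_injective (g := (2 * ·)) (fun _ _ h => by simpa using h) hS₂ k
  have hS₁' : adjoint S₁ (b (2 * k)) = 0 :=
    HilbertBasis.adjoint_apply_eq_zero (g := (2 * · + 1)) hS₁ fun ⟨j, hj⟩ => by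
      dsimp only at hj; omega
  subst hSt₁ hSt₂
  simp only [add_apply, mul_apply_eq_comp, pow_two, hS₁', hS₂', map_zero, zero_add, hS₁, hS₂]
  constructor <;> congr 1 <;> ring

theorem St_apply_two_mul_add_one (hS₂ : ∀ k, S₂ (b k) = b (2 * k))
    (hS₁ : ∀ k, S₁ (b k) = b (2 * k + 1))
    (hSt₁ : St₁ = S₂ ^ 2 * adjoint S₁ + S₁ * S₂ * adjoint S₂)
    (hSt₂ : St₂ = S₂ * S₁ * adjoint S₁ + S₁ ^ 2 * adjoint S₂) (k : ℤ) :
    St₁ (b (2 * k + 1)) = b (4 * k) ∧ St₂ (b (2 * k + 1)) = b (4 * k + 2) := by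
  have hS₁' : adjoint S₁ (b (2 * k + 1)) = b k :=
    HilbertBasis.adjoint_apply_of_injective (g := (2 * · + 1)) (fun _ _ h => by simpa using h) hS₁ k
  have hS₂' : adjoint S₂ (b (2 * k + 1)) = 0 :=
    HilbertBasis.adjoint_apply_eq_zero (g := (2 * ·)) hS₂ fun ⟨j, hj⟩ => by
      dsimp only at hj; omega
  subst hSt₁ hSt₂
  simp only [add_apply, mul_apply_eq_comp, pow_two, hS₁', hS₂', map_zero, add_zero, hS₁, hS₂]
  constructor <;> congr 1 <;> ring

theorem St₂_apply (hS₂ : ∀ k, S₂ (b k) = b (2 * k)) (hS₁ : ∀ k, S₁ (b k) = b (2 * k + 1))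
    (hSt₂ : St₂ = S₂ * S₁ * adjoint S₁ + S₁ ^ 2 * adjoint S₂) (k : ℤ) :
    St₂ (b k) = b (rho14Index k) := by
  obtain ⟨j, rfl | rfl⟩ := Int.even_or_odd' k
  · rw [(St_apply_two_mul hS₂ hS₁ rfl hSt₂ j).2, rho14Index_two_mul]
  · rw [(St_apply_two_mul_add_one hS₂ hS₁ rfl hSt₂ j).2, rho14Index_two_mul_add_one]

theorem Ut_mul_St₂ (hS₂ : ∀ k, S₂ (b k) = b (2 * k)) (hS₁ : ∀ k, S₁ (b k) = b (2 * k + 1))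
    (hSt₁ : St₁ = S₂ ^ 2 * adjoint S₁ + S₁ * S₂ * adjoint S₂)
    (hSt₂ : St₂ = S₂ * S₁ * adjoint S₁ + S₁ ^ 2 * adjoint S₂)
    (hUt : ∀ k, Ut (b k) = b (k - 2)) :
    Ut * St₂ = St₁ := by
  refine b.ext_continuousLinearMap fun k => ?_
  obtain ⟨j, rfl | rfl⟩ := Int.even_or_odd' k
  · obtain ⟨h₁, h₂⟩ := St_apply_two_mul hS₂ hS₁ hSt₁ hSt₂ j
    rw [mul_apply_eq_comp, h₂, hUt, h₁]
    congr 1; ring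
  · obtain ⟨h₁, h₂⟩ := St_apply_two_mul_add_one hS₂ hS₁ hSt₁ hSt₂ j
    rw [mul_apply_eq_comp, h₂, hUt, h₁]
    congr 1; ring

theorem St₂_mul_Ut (hS₂ : ∀ k, S₂ (b k) = b (2 * k)) (hS₁ : ∀ k, S₁ (b k) = b (2 * k + 1))
    (hSt₁ : St₁ = S₂ ^ 2 * adjoint S₁ + S₁ * S₂ * adjoint S₂)
    (hSt₂ : St₂ = S₂ * S₁ * adjoint S₁ + S₁ ^ 2 * adjoint S₂)
    (hUt : ∀ k, Ut (b k) = b (k - 2)) :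
    St₂ * Ut = Ut * St₁ := by
  refine b.ext_continuousLinearMap fun k => ?_
  obtain ⟨j, rfl | rfl⟩ := Int.even_or_odd' k
  · rw [mul_apply_eq_comp, mul_apply_eq_comp, hUt, show 2 * j - 2 = 2 * (j - 1) by ring,
      (St_apply_two_mul hS₂ hS₁ hSt₁ hSt₂ (j - 1)).2, (St_apply_two_mul hS₂ hS₁ hSt₁ hSt₂ j).1,
      hUt]
    congr 1; ring
  · rw [mul_apply_eq_comp, mul_apply_eq_comp, hUt, show 2 * j + 1 - 2 = 2 * (j - 1) + 1 by ring,
      (St_apply_two_mul_add_one hS₂ hS₁ hSt₁ hSt₂ (j - 1)).2,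
      (St_apply_two_mul_add_one hS₂ hS₁ hSt₁ hSt₂ j).1, hUt]
    congr 1; ring

theorem St₂_mul_adjoint_add_conj_eq_one (hS₂ : ∀ k, S₂ (b k) = b (2 * k))
    (hS₁ : ∀ k, S₁ (b k) = b (2 * k + 1))
    (hSt₂ : St₂ = S₂ * S₁ * adjoint S₁ + S₁ ^ 2 * adjoint S₂)
    (hUt : ∀ k, Ut (b k) = b (k - 2)) :
    St₂ * adjoint St₂ + Ut * (St₂ * adjoint St₂) * adjoint Ut = 1 := by
  refine b.ext_continuousLinearMap fun m => ?_
  have hUt' : adjoint Ut (b m) = b (m + 2) := by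
    simpa using
      HilbertBasis.adjoint_apply_of_injective (g := (· - 2)) sub_left_injective hUt (m + 2)
  have hproj := HilbertBasis.apply_adjoint_apply rho14Index_injective (St₂_apply hS₂ hS₁ hSt₂)
  simp only [add_apply, mul_apply_eq_comp, one_apply_eq_self, hUt', hproj]
  by_cases hm : m ∈ range rho14Index
  · rw [indicator_of_mem hm, indicator_of_notMem (add_two_mem_range_rho14Index.not_left.mpr hm),
      map_zero, add_zero]
  · rw [indicator_of_notMem hm, indicator_of_mem (add_two_mem_range_rho14Index.mpr hm), hUt,
      add_sub_cancel_right, zero_add]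

end Rho14

/-- The quadratic permutation endomorphism `ρ₁₄` of `O₂` extends to `Q₂` with
`ρ₁₄(U) = U^{-2}`: in the canonical representation on `ℓ²(ℤ)`, with
`S̃₁ = S₂² S₁* + S₁ S₂ S₂*`, `S̃₂ = S₂ S₁ S₁* + S₁² S₂*` and `Ũ = U^{-2}`
(`Ũ e_k = e_{k-2}`), one has the basis formulas
`S̃₁ e_{2k} = e_{4k+1}`, `S̃₁ e_{2k+1} = e_{4k}`, `S̃₂ e_{2k} = e_{4k+3}`,
`S̃₂ e_{2k+1} = e_{4k+2}`, the relations `Ũ S̃₂ = S̃₁`, `S̃₂ Ũ = Ũ S̃₁`, and hence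
the defining relations of `Q₂`: `S̃₂ Ũ = Ũ² S̃₂` and `S̃₂ S̃₂* + Ũ S̃₂ S̃₂* Ũ* = 1`. -/
theorem stmt17 (U S₂ S₁ St₁ St₂ Ut : lp (fun _ : ℤ => ℂ) 2 →L[ℂ] lp (fun _ : ℤ => ℂ) 2)
    (hU : ∀ k : ℤ, U (e k) = e (k + 1))
    (hS₂ : ∀ k : ℤ, S₂ (e k) = e (2 * k))
    (hS₁ : S₁ = U * S₂)
    (hSt₁ : St₁ = S₂ ^ 2 * adjoint S₁ + S₁ * S₂ * adjoint S₂)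
    (hSt₂ : St₂ = S₂ * S₁ * adjoint S₁ + S₁ ^ 2 * adjoint S₂)
    (hUt : ∀ k : ℤ, Ut (e k) = e (k - 2)) :
    (∀ k : ℤ, St₁ (e (2 * k)) = e (4 * k + 1) ∧ St₁ (e (2 * k + 1)) = e (4 * k) ∧
      St₂ (e (2 * k)) = e (4 * k + 3) ∧ St₂ (e (2 * k + 1)) = e (4 * k + 2)) ∧
    Ut * St₂ = St₁ ∧ St₂ * Ut = Ut * St₁ ∧
    St₂ * Ut = Ut ^ 2 * St₂ ∧
    St₂ * adjoint St₂ + Ut * (St₂ * adjoint St₂) * adjoint Ut = 1 := by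
  rw [e_eq_default] at hU hS₂ hUt ⊢
  set b : HilbertBasis ℤ ℂ (lp (fun _ : ℤ => ℂ) 2) := default
  have hS₁' : ∀ k, S₁ (b k) = b (2 * k + 1) := fun k => by
    rw [hS₁, mul_apply_eq_comp, hS₂, hU]
  have hUSt₂ := Ut_mul_St₂ hS₂ hS₁' hSt₁ hSt₂ hUt
  have hSt₂U := St₂_mul_Ut hS₂ hS₁' hSt₁ hSt₂ hUt
  refine ⟨fun k => ?_, hUSt₂, hSt₂U, ?_, St₂_mul_adjoint_add_conj_eq_one hS₂ hS₁' hSt₂ hUt⟩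
  · obtain ⟨hSt₁_even, hSt₂_even⟩ := St_apply_two_mul hS₂ hS₁' hSt₁ hSt₂ k
    obtain ⟨hSt₁_odd, hSt₂_odd⟩ := St_apply_two_mul_add_one hS₂ hS₁' hSt₁ hSt₂ k
    exact ⟨hSt₁_even, hSt₁_odd, hSt₂_even, hSt₂_odd⟩
  · rw [pow_two, mul_assoc, hUSt₂, hSt₂U]
end

section
/- In the canonical representation of Q₂ on ℓ²(ℤ) (U e_k = e_{k+1}, S₂ e_k = e_{2k}, S₁ = U S₂), the operators T₁ = S₂ S₁ S₁* + S₁ S₂ S₂* and T₂ = S₂² S₁* + S₁² S₂* (the images of the Cuntz generators under the endomorphism ρ₁₃₄ of O₂) act on the basis by T₁ e_{2k} = e_{4k+1}, T₁ e_{2k+1} = e_{4k+2}, T₂ e_{2k} = e_{4k+3}, T₂ e_{2k+1} = e_{4k} for all k ∈ ℤ. Consequently both T₁ and T₂ are pure isometries, i.e. the index maps k ↦ (index of T_i e_k) have empty intersection of the images of their iterates over ℤ. -/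
open ContinuousLinearMap

/-!
`S₂`, `S₁` and hence `T₁`, `T₂` send each basis vector `e k` to a basis vector `e (f k)`,
and the adjoint of such an operator sends `e (f m)` to `e m` and kills `e j` for
`j ∉ range f`; this gives the action of `T₁`, `T₂` on the basis. Every vector in the range of
`T ^ n` has zero coordinates off `range f^[n]`, so `T` is pure once `⋂ₙ range f^[n] = ∅`.
For the index maps of `T₁` and `T₂` this follows by descent on `|k|`: both maps strictly
increase `|k|` on their ranges, and a point of `⋂ₙ range f^[n]` has a preimage that again
lies in the intersection.
-/

theorem Function.iInter_range_iterate_eq_empty {α : Type*} {f : α → α}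
    (hf : Function.Injective f) (μ : α → ℕ) (hμ : ∀ m ∈ Set.range f, μ m < μ (f m)) :
    ⋂ n ∈ Set.Ici 1, Set.range f^[n] = ∅ := by
  set S := ⋂ n ∈ Set.Ici 1, Set.range f^[n]
  have preimage_mem : ∀ j ∈ S, ∃ i ∈ S, f i = j := by
    intro j hj
    simp only [S, Set.mem_iInter, Set.mem_Ici, Set.mem_range] at hj ⊢
    obtain ⟨i, rfl⟩ := hj 1 le_rfl
    refine ⟨i, fun n _ => ?_, rfl⟩
    obtain ⟨m, hm⟩ := hj (n + 1) (by omega)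
    rw [Function.iterate_succ_apply'] at hm
    exact ⟨m, hf hm⟩
  refine Set.eq_empty_of_forall_notMem fun j => ?_
  induction j using (measure μ).wf.induction with
  | _ j ih =>
    intro hj
    obtain ⟨i, hi, rfl⟩ := preimage_mem j hj
    have hi_range : i ∈ Set.range f := by simpa using Set.mem_iInter₂.mp hi 1 Set.self_mem_Ici
    exact ih i (hμ i hi_range) hi

local notation "ℓ²" => lp (fun _ : ℤ => ℂ) 2

theorem inner_e_left (k : ℤ) (x : ℓ²) : inner ℂ (e k) x = x k := by
  simp [e, lp.inner_single_left]

theorem inner_e_e (a b : ℤ) : inner ℂ (e a) (e b) = if a = b then 1 else 0 := by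
  rw [inner_e_left]
  simp [e, lp.single_apply, Pi.single_apply]

section IndexMap

variable {A : ℓ² →L[ℂ] ℓ²} {f : ℤ → ℤ}

theorem adjoint_apply_e_of_injective (hA : ∀ k, A (e k) = e (f k)) (hf : Function.Injective f)
    (m : ℤ) : adjoint A (e (f m)) = e m := by
  ext k
  rw [← inner_e_left, ← inner_e_left, adjoint_inner_right, hA, inner_e_e, inner_e_e]
  simp only [hf.eq_iff]

theorem adjoint_apply_e_of_notMem_range (hA : ∀ k, A (e k) = e (f k)) {j : ℤ}
    (hj : j ∉ Set.range f) : adjoint A (e j) = 0 := by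
  ext k
  rw [← inner_e_left, adjoint_inner_right, hA, inner_e_e, if_neg fun h => hj ⟨k, h⟩,
    lp.coeFn_zero, Pi.zero_apply]

theorem apply_coeff_eq_zero_of_notMem_range (hA : ∀ k, A (e k) = e (f k)) {j : ℤ}
    (hj : j ∉ Set.range f) (y : ℓ²) : A y j = 0 := by
  rw [← inner_e_left, ← adjoint_inner_left, adjoint_apply_e_of_notMem_range hA hj,
    inner_zero_left]

theorem pow_apply_e_s19 (hA : ∀ k, A (e k) = e (f k)) (n : ℕ) (k : ℤ) :
    (A ^ n) (e k) = e (f^[n] k) := by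
  induction n with
  | zero => rfl
  | succ n ih => rw [pow_succ', mul_apply_eq_comp, ih, hA, Function.iterate_succ_apply']

theorem iInter_range_pow_eq_zero (hA : ∀ k, A (e k) = e (f k))
    (hf : ⋂ n ∈ Set.Ici 1, Set.range f^[n] = ∅) :
    (⋂ n ∈ Set.Ici 1, Set.range ⇑(A ^ n)) = {0} := by
  refine Set.eq_singleton_iff_unique_mem.mpr
    ⟨Set.mem_iInter₂.mpr fun n _ => ⟨0, map_zero _⟩, fun x hx => ?_⟩
  ext j
  obtain ⟨n, hn, hj⟩ : ∃ n ∈ Set.Ici 1, j ∉ Set.range f^[n] := by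
    by_contra! h
    exact (Set.eq_empty_iff_forall_notMem.mp hf) j (Set.mem_iInter₂.mpr h)
  obtain ⟨y, rfl⟩ := Set.mem_iInter₂.mp hx n hn
  exact apply_coeff_eq_zero_of_notMem_range (pow_apply_e_s19 hA n) hj y

end IndexMap

def indexT₁ (k : ℤ) : ℤ := if 2 ∣ k then 2 * k + 1 else 2 * k

def indexT₂ (k : ℤ) : ℤ := if 2 ∣ k then 2 * k + 3 else 2 * k - 2

theorem indexT₁_two_mul (k : ℤ) : indexT₁ (2 * k) = 4 * k + 1 := by
  simp only [indexT₁]; split_ifs <;> omega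

theorem indexT₁_two_mul_add_one (k : ℤ) : indexT₁ (2 * k + 1) = 4 * k + 2 := by
  simp only [indexT₁]; split_ifs <;> omega

theorem indexT₂_two_mul (k : ℤ) : indexT₂ (2 * k) = 4 * k + 3 := by
  simp only [indexT₂]; split_ifs <;> omega

theorem indexT₂_two_mul_add_one (k : ℤ) : indexT₂ (2 * k + 1) = 4 * k := by
  simp only [indexT₂]; split_ifs <;> omega

theorem iInter_range_iterate_indexT₁ : ⋂ n ∈ Set.Ici 1, Set.range indexT₁^[n] = ∅ := by
  refine Function.iInter_range_iterate_eq_empty (fun a b h => ?_) Int.natAbs fun m _ => ?_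
  · simp only [indexT₁] at h; split_ifs at h <;> omega
  · simp only [indexT₁]; split_ifs <;> omega

-- `indexT₂` shrinks `|k|` only at `-2` and `1`, both outside its range `{k ≡ 0, 3 mod 4}`.
theorem iInter_range_iterate_indexT₂ : ⋂ n ∈ Set.Ici 1, Set.range indexT₂^[n] = ∅ := by
  refine Function.iInter_range_iterate_eq_empty (fun a b h => ?_) Int.natAbs ?_
  · simp only [indexT₂] at h; split_ifs at h <;> omega
  · rintro _ ⟨m, rfl⟩
    simp only [indexT₂]; split_ifs <;> omega

theorem apply_e_of_even_odd {T : ℓ² →L[ℂ] ℓ²} {f : ℤ → ℤ}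
    (h : ∀ k, T (e (2 * k)) = e (f (2 * k)) ∧ T (e (2 * k + 1)) = e (f (2 * k + 1))) (k : ℤ) :
    T (e k) = e (f k) := by
  obtain ⟨m, rfl | rfl⟩ := Int.even_or_odd' k
  exacts [(h m).1, (h m).2]

/-- In the canonical representation of `Q₂` on `ℓ²(ℤ)`, the images
`T₁ = S₂ S₁ S₁* + S₁ S₂ S₂*` and `T₂ = S₂² S₁* + S₁² S₂*` of the Cuntz generators
under `ρ₁₃₄` act on the basis by `T₁ e_{2k} = e_{4k+1}`, `T₁ e_{2k+1} = e_{4k+2}`,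
`T₂ e_{2k} = e_{4k+3}`, `T₂ e_{2k+1} = e_{4k}`; consequently both are pure
isometries. -/
theorem stmt19 (U S₂ S₁ T₁ T₂ : lp (fun _ : ℤ => ℂ) 2 →L[ℂ] lp (fun _ : ℤ => ℂ) 2)
    (hU : ∀ k : ℤ, U (e k) = e (k + 1))
    (hS₂ : ∀ k : ℤ, S₂ (e k) = e (2 * k))
    (hS₁ : S₁ = U * S₂)
    (hT₁ : T₁ = S₂ * S₁ * adjoint S₁ + S₁ * S₂ * adjoint S₂)
    (hT₂ : T₂ = S₂ ^ 2 * adjoint S₁ + S₁ ^ 2 * adjoint S₂) :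
    (∀ k : ℤ, T₁ (e (2 * k)) = e (4 * k + 1) ∧ T₁ (e (2 * k + 1)) = e (4 * k + 2) ∧
      T₂ (e (2 * k)) = e (4 * k + 3) ∧ T₂ (e (2 * k + 1)) = e (4 * k)) ∧
    (⋂ n ∈ Set.Ici 1, Set.range ⇑(T₁ ^ n)) = {0} ∧
    (⋂ n ∈ Set.Ici 1, Set.range ⇑(T₂ ^ n)) = {0} := by
  have hS₁e : ∀ k, S₁ (e k) = e (2 * k + 1) := fun k => by
    rw [hS₁, mul_apply_eq_comp, hS₂, hU]
  have adjoint_S₂_even : ∀ k, adjoint S₂ (e (2 * k)) = e k :=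
    adjoint_apply_e_of_injective hS₂ fun a b h => by simpa using h
  have adjoint_S₂_odd : ∀ k, adjoint S₂ (e (2 * k + 1)) = 0 := fun k =>
    adjoint_apply_e_of_notMem_range hS₂ fun ⟨m, hm⟩ => by omega
  have adjoint_S₁_odd : ∀ k, adjoint S₁ (e (2 * k + 1)) = e k :=
    adjoint_apply_e_of_injective hS₁e fun a b h => by simpa using h
  have adjoint_S₁_even : ∀ k, adjoint S₁ (e (2 * k)) = 0 := fun k =>
    adjoint_apply_e_of_notMem_range hS₁e fun ⟨m, hm⟩ => by beta_reduce at hm; omega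
  have action : ∀ k : ℤ,
      T₁ (e (2 * k)) = e (4 * k + 1) ∧ T₁ (e (2 * k + 1)) = e (4 * k + 2) ∧
      T₂ (e (2 * k)) = e (4 * k + 3) ∧ T₂ (e (2 * k + 1)) = e (4 * k) := fun k => by
    simp only [hT₁, hT₂, add_apply, mul_apply_eq_comp, pow_two, adjoint_S₁_odd,
      adjoint_S₁_even, adjoint_S₂_odd, adjoint_S₂_even, map_zero, zero_add, add_zero, hS₁e, hS₂]
    refine ⟨?_, ?_, ?_, ?_⟩ <;> congr 1 <;> ring
  have hT₁e : ∀ k, T₁ (e k) = e (indexT₁ k) := apply_e_of_even_odd fun k => by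
    rw [indexT₁_two_mul, indexT₁_two_mul_add_one]; exact ⟨(action k).1, (action k).2.1⟩
  have hT₂e : ∀ k, T₂ (e k) = e (indexT₂ k) := apply_e_of_even_odd fun k => by
    rw [indexT₂_two_mul, indexT₂_two_mul_add_one]
    exact ⟨(action k).2.2.1, (action k).2.2.2⟩
  exact ⟨action, iInter_range_pow_eq_zero hT₁e iInter_range_iterate_indexT₁,
    iInter_range_pow_eq_zero hT₂e iInter_range_iterate_indexT₂⟩
end
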